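/- arXiv:1710.11574 — 2 statements merged into one kernel-verified Lean document; each statement's English description precedes it below -/
import Mathlib

section
/- With S a commutative local ring with involution, 2 a unit, V free of rank 2m ≥ 4 with nondegenerate skew hermitian form and symplectic basis: the subgroup T generated by unitary transvections f_{a,v} (a ∈ R, v a basis vector of length 0) acts transitively on symplectic pairs in V, i.e., on pairs (u,v) with h(u,u) = h(v,v) = 0 and h(u,v) = 1 with u,v part of a symplectic set. -/
variable {S V : Type*} [CommRing S] [StarRing S] [AddCommGroup V] [Module S V]

/-- `b` is a symplectic basis for the skew hermitian form `h`. -/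
def IsSympBasis {m : ℕ} (h : V →ₛₗ[starRingEnd S] V →ₗ[S] S)
    (b : Module.Basis (Fin m ⊕ Fin m) S V) : Prop :=
  (∀ i j, h (b (.inl i)) (b (.inr j)) = if i = j then 1 else 0) ∧
  (∀ i j, h (b (.inl i)) (b (.inl j)) = 0) ∧
  (∀ i j, h (b (.inr i)) (b (.inr j)) = 0)

/-- `v` is a basis vector of the free module `V` of rank `2m`. -/
def IsBasisVector (S : Type*) {V : Type*} [CommRing S] [AddCommGroup V] [Module S V]
    (m : ℕ) (v : V) : Prop :=
  ∃ (c : Module.Basis (Fin m ⊕ Fin m) S V) (i : Fin m ⊕ Fin m), c i = v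

/-- The unitary transvection `f_{a,v} : u ↦ u + a h(v,u) v`. -/
def transvect (h : V →ₛₗ[starRingEnd S] V →ₗ[S] S) (a : S) (v : V) : Module.End S V :=
  LinearMap.id + LinearMap.smulRight (a • h v) v

/-- The set of invertible endomorphisms given by unitary transvections `f_{a,v}`
with `a ∈ R` and `v` a basis vector of length zero. -/
def transvSet (h : V →ₛₗ[starRingEnd S] V →ₗ[S] S) (m : ℕ) : Set (Module.End S V)ˣ :=
  {g | ∃ (a : S) (v : V), star a = a ∧ h v v = 0 ∧ IsBasisVector S m v ∧
    (g : Module.End S V) = transvect h a v}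

/-!
Over a local ring a vector pairing to a unit with some vector has a unit coordinate, hence is a
basis vector. So for a symplectic pair `(z, z')` the centre `z' - z` of the transvection
`f_{-1, z' - z}`, which carries `z` to `z'`, is admissible. Chaining such moves through isotropic
intermediates `p + d • x` (with `p`, `x` orthogonal isotropic combinations of basis vectors and
`h z x` a unit, which locality provides), any symplectic pair `(u, v)` is carried to `(e₀, v')`,
and then, by moves that fix `e₀`, to the basis pair `(e₀, f₀)`; making room for the intermediates
needs a second hyperbolic plane, i.e. `m ≥ 2`.
-/

open Module

theorem Module.Basis.exists_apply_eq_of_isUnit_repr {ι R M : Type*} [CommRing R]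
    [AddCommGroup M] [Module R M] (b : Basis ι R M) {x : M} {k : ι}
    (hx : IsUnit (b.repr x k)) : ∃ c : Basis ι R M, c k = x := by
  have hunit : IsUnit (1 + b.coord k (x - b k)) := by simpa using hx
  exact ⟨b.map (LinearEquiv.dilatransvection hunit),
    by simp [LinearEquiv.dilatransvection.apply]⟩

theorem Module.Basis.exists_isUnit_repr_of_isUnit_apply {ι R M : Type*} [Fintype ι]
    [CommRing R] [IsLocalRing R] [AddCommGroup M] [Module R M] (b : Basis ι R M)
    (f : M →ₗ[R] R) {x : M} (hx : IsUnit (f x)) :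
    ∃ k, IsUnit (b.repr x k) ∧ IsUnit (f (b k)) := by
  rw [← b.sum_repr x, map_sum] at hx
  obtain ⟨k, -, hk⟩ := IsLocalRing.exists_of_isUnit_sum hx
  rw [map_smul, smul_eq_mul] at hk
  exact ⟨k, isUnit_of_mul_isUnit_left hk, isUnit_of_mul_isUnit_right hk⟩

theorem isBasisVector_of_isUnit {R M : Type*} [CommRing R] [IsLocalRing R] [AddCommGroup M]
    [Module R M] {m : ℕ} (b : Basis (Fin m ⊕ Fin m) R M) (f : M →ₗ[R] R) {x : M}
    (hx : IsUnit (f x)) : IsBasisVector R m x := by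
  obtain ⟨k, hk, -⟩ := b.exists_isUnit_repr_of_isUnit_apply f hx
  obtain ⟨c, hc⟩ := b.exists_apply_eq_of_isUnit_repr hk
  exact ⟨c, k, hc⟩

section Transvection

variable {m : ℕ} {h : V →ₛₗ[starRingEnd S] V →ₗ[S] S}

theorem apply_eq_neg_star (hskew : ∀ x y, star (h x y) = - h y x) (x y : V) :
    h y x = -star (h x y) := by
  rw [hskew, neg_neg]

theorem transvect_apply (a : S) (w x : V) : transvect h a w x = x + (a * h w x) • w := by
  simp [transvect, mul_smul]

theorem transvect_eq_transvection (a : S) (w : V) :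
    transvect h a w = LinearMap.transvection (a • h w) w :=
  rfl

theorem isUnit_transvect {w : V} (hw : h w w = 0) (a : S) : IsUnit (transvect h a w) := by
  have hfw : (a • h w) w = 0 := by simp [hw]
  rw [transvect_eq_transvection, ← LinearEquiv.transvection.coe_toLinearMap hfw]
  exact (Module.End.isUnit_iff _).2 (LinearEquiv.bijective _)

theorem transvect_apply_transvect_apply (hskew : ∀ x y, star (h x y) = - h y x) {a : S}
    (ha : star a = a) {w : V} (hw : h w w = 0) (x y : V) :
    h (transvect h a w x) (transvect h a w y) = h x y := by
  simp only [transvect_apply, map_add, LinearMap.map_smulₛₗ, LinearMap.add_apply,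
    LinearMap.smul_apply, map_smul, smul_eq_mul, starRingEnd_apply, star_mul', ha, hw, hskew]
  ring

theorem apply_apply_of_mem_closure (hskew : ∀ x y, star (h x y) = - h y x)
    {g : (Module.End S V)ˣ} (hg : g ∈ Subgroup.closure (transvSet h m)) (x y : V) :
    h ((g : Module.End S V) x) ((g : Module.End S V) y) = h x y := by
  induction hg using Subgroup.closure_induction generalizing x y with
  | mem t ht =>
    obtain ⟨a, w, ha, hw, -, ht⟩ := ht
    rw [ht]
    exact transvect_apply_transvect_apply hskew ha hw x y
  | one => rfl
  | mul p q _ _ hp hq => simp only [Units.val_mul, Module.End.mul_apply, hp, hq]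
  | inv p _ hp =>
    rw [← hp, ← Module.End.mul_apply, ← Module.End.mul_apply, Units.mul_inv]
    rfl

end Transvection

namespace IsSympBasis

variable {m : ℕ} {h : V →ₛₗ[starRingEnd S] V →ₗ[S] S} {b : Basis (Fin m ⊕ Fin m) S V}

theorem apply_inr_inl (hskew : ∀ x y, star (h x y) = - h y x) (hb : IsSympBasis h b)
    (i j : Fin m) : h (b (.inr i)) (b (.inl j)) = -(if j = i then 1 else 0) := by
  rw [apply_eq_neg_star hskew, hb.1, apply_ite star, star_one, star_zero]

theorem apply_eq_zero (hskew : ∀ x y, star (h x y) = - h y x) (hb : IsSympBasis h b)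
    {k l : Fin m ⊕ Fin m} (hkl : k ≠ l.swap) : h (b k) (b l) = 0 := by
  rcases k with i | i <;> rcases l with j | j
  · exact hb.2.1 i j
  · simp [hb.1, show i ≠ j by simpa using hkl]
  · simp [hb.apply_inr_inl hskew, show j ≠ i by simpa [eq_comm] using hkl]
  · exact hb.2.2 i j

theorem apply_eq_zero_of_ne_of_ne (hskew : ∀ x y, star (h x y) = - h y x)
    (hb : IsSympBasis h b) {i : Fin m} {k : Fin m ⊕ Fin m} (hk₁ : k ≠ .inl i)
    (hk₂ : k ≠ .inr i) :
    h (b k) (b (.inl i)) = 0 ∧ h (b k) (b (.inr i)) = 0 ∧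
      h (b (.inl i)) (b k) = 0 ∧ h (b (.inr i)) (b k) = 0 := by
  refine ⟨hb.apply_eq_zero hskew ?_, hb.apply_eq_zero hskew ?_, hb.apply_eq_zero hskew ?_,
    hb.apply_eq_zero hskew ?_⟩ <;> rcases k with j | j <;> simp_all [eq_comm]

theorem apply_self (hskew : ∀ x y, star (h x y) = - h y x) (hb : IsSympBasis h b)
    (k : Fin m ⊕ Fin m) : h (b k) (b k) = 0 :=
  hb.apply_eq_zero hskew (by cases k <;> simp)

end IsSympBasis

theorem exists_isotropic_apply_eq_one {h : V →ₛₗ[starRingEnd S] V →ₗ[S] S}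
    (hskew : ∀ x y, star (h x y) = - h y x) {z p x : V} (hp : h p p = 0) (hx : h x x = 0)
    (hpx : h p x = 0) (hzx : IsUnit (h z x)) :
    ∃ d : S, h (p + d • x) (p + d • x) = 0 ∧ h z (p + d • x) = 1 := by
  obtain ⟨c, hc⟩ := hzx.exists_left_inv
  have hxp : h x p = 0 := by rw [← neg_eq_zero, ← hskew, hpx, star_zero]
  refine ⟨(1 - h z p) * c, by simp [hp, hx, hpx, hxp], ?_⟩
  simp only [map_add, map_smul, smul_eq_mul]
  linear_combination (1 - h z p) * hc

section Moves

variable {m : ℕ} {h : V →ₛₗ[starRingEnd S] V →ₗ[S] S}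

def TransvMoves (h : V →ₛₗ[starRingEnd S] V →ₗ[S] S) (m : ℕ) (E : Set V) (z z' : V) : Prop :=
  ∃ g ∈ Subgroup.closure (transvSet h m),
    (g : Module.End S V) z = z' ∧ ∀ e ∈ E, (g : Module.End S V) e = e

theorem TransvMoves.trans {E : Set V} {z₁ z₂ z₃ : V} (h₁₂ : TransvMoves h m E z₁ z₂)
    (h₂₃ : TransvMoves h m E z₂ z₃) : TransvMoves h m E z₁ z₃ := by
  obtain ⟨g₁, hg₁, hz₁, hE₁⟩ := h₁₂
  obtain ⟨g₂, hg₂, hz₂, hE₂⟩ := h₂₃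
  refine ⟨g₂ * g₁, mul_mem hg₂ hg₁, by simp [hz₁, hz₂], fun e he => ?_⟩
  simp [hE₁ e he, hE₂ e he]

theorem transvMoves_of_apply_eq_one [IsLocalRing S] (hskew : ∀ x y, star (h x y) = - h y x)
    (b : Basis (Fin m ⊕ Fin m) S V) {E : Set V} {z z' : V} (hz : h z z = 0) (hz' : h z' z' = 0)
    (hzz' : h z z' = 1) (hE : ∀ e ∈ E, h z e = h z' e) : TransvMoves h m E z z' := by
  have hz'z : h z' z = -1 := by rw [apply_eq_neg_star hskew, hzz', star_one]
  have hw : h (z' - z) (z' - z) = 0 := by simp [hz, hz', hzz', hz'z]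
  have hbasis : IsBasisVector S m (z' - z) :=
    isBasisVector_of_isUnit b (h z) (by simp [hz, hzz'])
  refine ⟨(isUnit_transvect hw (-1)).unit,
    Subgroup.subset_closure ⟨-1, z' - z, by simp, hw, hbasis, rfl⟩, ?_, fun e he => ?_⟩
  · simp [transvect_apply, hz, hz'z]
  · simp [transvect_apply, hE e he]

end Moves

section Reduction

variable {m : ℕ} {h : V →ₛₗ[starRingEnd S] V →ₗ[S] S} {b : Basis (Fin m ⊕ Fin m) S V}
  [IsLocalRing S]

theorem transvMoves_inl_of_isUnit_apply (hskew : ∀ x y, star (h x y) = - h y x)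
    (hb : IsSympBasis h b) {i₀ : Fin m} {k : Fin m ⊕ Fin m} (hk₁ : k ≠ .inl i₀)
    (hk₂ : k ≠ .inr i₀) {z : V} (hz : h z z = 0) (hzk : IsUnit (h z (b k))) :
    TransvMoves h m ∅ z (b (.inl i₀)) := by
  obtain ⟨hke, -, -, hfk⟩ := hb.apply_eq_zero_of_ne_of_ne hskew hk₁ hk₂
  obtain ⟨d, hy, hzy⟩ := exists_isotropic_apply_eq_one hskew (p := -b (.inr i₀))
    (by simp [hb.2.2]) (hb.apply_self hskew k) (by simp [hfk]) hzk
  refine (transvMoves_of_apply_eq_one hskew b hz hy hzy (by simp)).trans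
    (transvMoves_of_apply_eq_one hskew b hy (hb.2.1 i₀ i₀) ?_ (by simp))
  simp [hb.apply_inr_inl hskew, hke]

theorem transvMoves_inl (hskew : ∀ x y, star (h x y) = - h y x) (hb : IsSympBasis h b)
    {i₀ i₁ : Fin m} (hne : i₁ ≠ i₀) {z v : V} (hz : h z z = 0) (hzv : IsUnit (h z v)) :
    TransvMoves h m ∅ z (b (.inl i₀)) := by
  obtain ⟨k, -, hk⟩ := b.exists_isUnit_repr_of_isUnit_apply (h z) hzv
  by_cases hslot : k ≠ .inl i₀ ∧ k ≠ .inr i₀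
  · exact transvMoves_inl_of_isUnit_apply hskew hb hslot.1 hslot.2 hz hk
  -- `z` only pairs to a unit in the hyperbolic plane of `i₀`: first move it out along `e_{i₁}`.
  obtain ⟨hek, hkf⟩ : h (b (.inl i₁)) (b k) = 0 ∧ h (b k) (b (.inr i₁)) = 0 := by
    obtain rfl | rfl : k = .inl i₀ ∨ k = .inr i₀ := by tauto
    · exact ⟨hb.2.1 i₁ i₀, by simp [hb.1, hne.symm]⟩
    · exact ⟨by simp [hb.1, hne], hb.2.2 i₀ i₁⟩
  obtain ⟨d, hy, hzy⟩ := exists_isotropic_apply_eq_one hskew (hb.apply_self hskew _)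
    (hb.apply_self hskew k) hek hk
  refine (transvMoves_of_apply_eq_one hskew b hz hy hzy (by simp)).trans
    (transvMoves_inl_of_isUnit_apply hskew hb (k := .inr i₁) (by simp) (by simpa using hne) hy ?_)
  simp [hb.1, hkf]

theorem transvMoves_inr_of_isUnit_apply (hskew : ∀ x y, star (h x y) = - h y x)
    (hb : IsSympBasis h b) {i₀ : Fin m} {k : Fin m ⊕ Fin m} (hk₁ : k ≠ .inl i₀)
    (hk₂ : k ≠ .inr i₀) {w : V} (hw : h w w = 0) (hwe : h w (b (.inl i₀)) = -1)
    (hwk : IsUnit (h w (b k))) :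
    TransvMoves h m {b (.inl i₀)} w (b (.inr i₀)) := by
  obtain ⟨hke, hkf, hek, hfk⟩ := hb.apply_eq_zero_of_ne_of_ne hskew hk₁ hk₂
  obtain ⟨d, hy, hwy⟩ := exists_isotropic_apply_eq_one hskew
    (p := b (.inr i₀) + b (.inl i₀)) (by simp [hb.1, hb.2.1, hb.2.2, hb.apply_inr_inl hskew])
    (hb.apply_self hskew k) (by simp [hek, hfk]) hwk
  refine (transvMoves_of_apply_eq_one hskew b hw hy hwy ?_).trans
    (transvMoves_of_apply_eq_one hskew b hy (hb.apply_self hskew _) ?_ ?_)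
  · simp [hwe, hb.2.1, hb.apply_inr_inl hskew, hke]
  · simp [hb.1, hb.2.2, hkf]
  · simp [hb.2.1, hb.apply_inr_inl hskew, hke]

theorem transvMoves_inr (hskew : ∀ x y, star (h x y) = - h y x) (hb : IsSympBasis h b)
    {i₀ i₁ : Fin m} (hne : i₁ ≠ i₀) {w : V} (hw : h w w = 0)
    (hwe : h w (b (.inl i₀)) = -1) :
    TransvMoves h m {b (.inl i₀)} w (b (.inr i₀)) := by
  have hsplit : IsUnit (h w (b (.inl i₀) - b (.inl i₁)) + h w (b (.inl i₁))) := by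
    rw [← map_add, sub_add_cancel, hwe]
    exact isUnit_one.neg
  rcases IsLocalRing.isUnit_or_isUnit_of_isUnit_add hsplit with hx | h₁
  · obtain ⟨d, hy, hwy⟩ := exists_isotropic_apply_eq_one hskew
      (p := b (.inr i₀) + b (.inr i₁)) (by simp [hb.2.2]) (by simp [hb.2.1])
      (by simp [hb.apply_inr_inl hskew, hne, hne.symm]) hx
    refine (transvMoves_of_apply_eq_one hskew b hw hy hwy ?_).trans
      (transvMoves_inr_of_isUnit_apply hskew hb (k := .inl i₁) (by simpa using hne) (by simp)
        hy ?_ ?_)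
    · simp [hwe, hb.2.1, hb.apply_inr_inl hskew, hne.symm]
    · simp [hb.2.1, hb.apply_inr_inl hskew, hne.symm]
    · simp [hb.2.1, hb.apply_inr_inl hskew, hne]
  · exact transvMoves_inr_of_isUnit_apply hskew hb (by simpa using hne) (by simp) hw hwe h₁

end Reduction

theorem exists_mem_closure_apply_eq_inl_inr [IsLocalRing S] {m : ℕ}
    {h : V →ₛₗ[starRingEnd S] V →ₗ[S] S} (hskew : ∀ x y, star (h x y) = - h y x)
    {b : Basis (Fin m ⊕ Fin m) S V} (hb : IsSympBasis h b) {i₀ i₁ : Fin m} (hne : i₁ ≠ i₀)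
    {u v : V} (hu : h u u = 0) (hv : h v v = 0) (huv : h u v = 1) :
    ∃ g ∈ Subgroup.closure (transvSet h m),
      (g : Module.End S V) u = b (.inl i₀) ∧ (g : Module.End S V) v = b (.inr i₀) := by
  obtain ⟨g₁, hg₁, hu₁, -⟩ := transvMoves_inl hskew hb hne hu (v := v) (by simp [huv])
  have hw : h (g₁.val v) (g₁.val v) = 0 := by rw [apply_apply_of_mem_closure hskew hg₁, hv]
  have hwe : h (g₁.val v) (b (.inl i₀)) = -1 := by
    rw [← hu₁, apply_apply_of_mem_closure hskew hg₁, apply_eq_neg_star hskew, huv, star_one]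
  obtain ⟨g₂, hg₂, hv₂, he₂⟩ := transvMoves_inr hskew hb hne hw hwe
  exact ⟨g₂ * g₁, mul_mem hg₂ hg₁, by simp [hu₁, he₂ _ rfl], by simp [hv₂]⟩

theorem stmt13_general [IsLocalRing S] {m : ℕ} (hm : 2 ≤ m)
    (h : V →ₛₗ[starRingEnd S] V →ₗ[S] S)
    (hskew : ∀ x y, star (h x y) = - h y x)
    (b : Module.Basis (Fin m ⊕ Fin m) S V) (hb : IsSympBasis h b)
    (u v u' v' : V)
    (hu0 : h u u = 0) (hv0 : h v v = 0) (huv : h u v = 1)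
    (hu0' : h u' u' = 0) (hv0' : h v' v' = 0) (huv' : h u' v' = 1) :
    ∃ g ∈ Subgroup.closure (transvSet h m),
      (g : Module.End S V) u = u' ∧ (g : Module.End S V) v = v' := by
  have hne : (⟨1, by omega⟩ : Fin m) ≠ ⟨0, by omega⟩ := by simp
  obtain ⟨g, hg, hgu, hgv⟩ := exists_mem_closure_apply_eq_inl_inr hskew hb hne hu0 hv0 huv
  obtain ⟨g', hg', hgu', hgv'⟩ :=
    exists_mem_closure_apply_eq_inl_inr hskew hb hne hu0' hv0' huv'
  have hcancel (x : V) : (g'⁻¹ : (Module.End S V)ˣ).val (g'.val x) = x := by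
    rw [← Module.End.mul_apply, ← Units.val_mul, inv_mul_cancel, Units.val_one,
      Module.End.one_apply]
  refine ⟨g'⁻¹ * g, mul_mem (inv_mem hg') hg, ?_, ?_⟩
  · rw [Units.val_mul, Module.End.mul_apply, hgu, ← hgu', hcancel]
  · rw [Units.val_mul, Module.End.mul_apply, hgv, ← hgv', hcancel]

/-- for `m ≥ 2` and `2 ∈ S^×`, the group generated by unitary
transvections acts transitively on symplectic pairs of `V`. -/
theorem stmt13 [IsLocalRing S] {m : ℕ} (hm : 2 ≤ m) (h2 : IsUnit (2 : S))
    (h : V →ₛₗ[starRingEnd S] V →ₗ[S] S)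
    (hskew : ∀ x y, star (h x y) = - h y x)
    (hnd : ∀ x, (∀ y, h x y = 0) → x = 0)
    (b : Module.Basis (Fin m ⊕ Fin m) S V) (hb : IsSympBasis h b)
    (u v u' v' : V)
    (hu0 : h u u = 0) (hv0 : h v v = 0) (huv : h u v = 1)
    (hu0' : h u' u' = 0) (hv0' : h v' v' = 0) (huv' : h u' v' = 1) :
    ∃ g ∈ Subgroup.closure (transvSet h m),
      (g : Module.End S V) u = u' ∧ (g : Module.End S V) v = v' :=
  stmt13_general hm h hskew b hb u v u' v' hu0 hv0 huv hu0' hv0' huv'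
end

section
/- Let S be a commutative local ring with involution * in which 2 is a unit, 𝔦 a proper *-invariant ideal, and V free of rank 2m over S with nondegenerate skew hermitian form admitting a symplectic basis. Let Ṽ = V/𝔦V with the induced skew hermitian form over S̃ = S/𝔦. If ũ is a basis vector of Ṽ with h̃(ũ,ũ) = 0, then there exists a basis vector w of V with h(w,w) = 0 whose image in Ṽ is ũ. -/
variable {S V : Type*} [CommRing S] [StarRing S] [AddCommGroup V] [Module S V]

/-!
Since `ũ` belongs to a basis of `Ṽ` and `𝔦 ⊆ 𝔪`, some coordinate of `u` in the symplectic basis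
is a unit. Pairing `u` with the dual basis vector gives an isotropic `v` with `h(u, v) = 1`. Then
`w = u - (h(u, u) / 2) • v` is isotropic because `h(u, u)` is skew, and `w ≡ u` modulo `𝔦V`.
As `𝔦 ⊆ 𝔪`, `w` keeps the unit coordinate of `u`, so it can replace that vector of the basis.
-/

namespace Module.Basis

variable {R M ι : Type*} [CommRing R] [AddCommGroup M] [Module R M] [Fintype ι]
  (b : Module.Basis ι R M)

theorem det_update [DecidableEq ι] (x : M) (i : ι) :
    b.det (Function.update b i x) = b.repr x i := by
  rw [b.det_apply, b.toMatrix_update, b.toMatrix_self, ← Matrix.cramer_apply, Matrix.cramer_one]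
  rfl

theorem exists_basis_apply_eq_of_isUnit_repr [DecidableEq ι] {x : M} {i : ι}
    (hx : IsUnit (b.repr x i)) : ∃ c : Module.Basis ι R M, c i = x := by
  obtain ⟨hli, hsp⟩ := b.is_basis_iff_det.mpr (b.det_update x i ▸ hx)
  exact ⟨Module.Basis.mk hli hsp.ge, by rw [Module.Basis.coe_mk, Function.update_self]⟩

theorem exists_repr_notMem_of_linearMap_ne_zero {J : Ideal R} (g : M →ₗ[R] R ⧸ J) {u : M}
    (hu : g u ≠ 0) : ∃ j, b.repr u j ∉ J := by
  contrapose! hu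
  rw [← b.sum_repr u, map_sum]
  refine Finset.sum_eq_zero fun j _ => ?_
  rw [map_smul, Algebra.smul_def, Ideal.Quotient.algebraMap_eq,
    Ideal.Quotient.eq_zero_iff_mem.mpr (hu j), zero_mul]

end Module.Basis

namespace IsLocalRing

variable {R : Type*} [CommRing R] [IsLocalRing R]

theorem isUnit_add_of_mem_maximalIdeal {x y : R} (hx : IsUnit x) (hy : y ∈ maximalIdeal R) :
    IsUnit (x + y) := by
  have hsum : IsUnit (x + y + -y) := by rwa [add_neg_cancel_right]
  exact (isUnit_or_isUnit_of_isUnit_add hsum).resolve_right ((mem_maximalIdeal _).mp (neg_mem hy))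

theorem exists_isUnit_repr_of_quotient_basis_apply_eq_mk {M ι κ : Type*} [AddCommGroup M]
    [Module R M] [Fintype ι] {I : Ideal R} (hI : I ≠ ⊤) (b : Module.Basis ι R M)
    (c : Module.Basis κ (R ⧸ I) (M ⧸ (I • ⊤ : Submodule R M))) (k : κ) {u : M}
    (hu : c k = Submodule.Quotient.mk u) : ∃ j, IsUnit (b.repr u j) := by
  let g : M →ₗ[R] R ⧸ maximalIdeal R :=
    (Ideal.Quotient.factorₐ R (le_maximalIdeal hI)).toLinearMap ∘ₗ
      (c.coord k).restrictScalars R ∘ₗ (I • ⊤ : Submodule R M).mkQ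
  have hgu : g u = 1 := by simp [g, ← hu]
  obtain ⟨j, hj⟩ := b.exists_repr_notMem_of_linearMap_ne_zero g (hgu ▸ one_ne_zero)
  exact ⟨j, notMem_maximalIdeal.mp hj⟩

end IsLocalRing

section SkewHermitian

theorem apply_eq_sum_star_repr_mul {ι : Type*} [Fintype ι]
    (h : V →ₛₗ[starRingEnd S] V →ₗ[S] S) (b : Module.Basis ι S V) (u y : V) :
    h u y = ∑ j, star (b.repr u j) * h (b j) y := by
  conv_lhs => rw [← b.sum_repr u]
  simp only [map_sum, LinearMap.sum_apply, map_smulₛₗ, LinearMap.smul_apply, smul_eq_mul,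
    starRingEnd_apply]

variable {h : V →ₛₗ[starRingEnd S] V →ₗ[S] S}

theorem exists_mem_span_apply_add_smul_self_eq_zero (hskew : ∀ x y, star (h x y) = - h y x)
    (h2 : IsUnit (2 : S)) {u v : V} (huv : h u v = 1) (hvv : h v v = 0) :
    ∃ a ∈ Ideal.span {h u u}, h (u + a • v) (u + a • v) = 0 := by
  obtain ⟨t, ht⟩ : ∃ t : S, 2 * t = 1 := ⟨_, h2.mul_val_inv⟩
  have hstar_t : star t = t := by
    have h2t : star t * 2 = 1 := by simpa [star_mul, star_ofNat] using congrArg star ht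
    linear_combination t * h2t - star t * ht
  have hvu : h v u = -1 := by rw [← neg_neg (h v u), ← hskew, huv, star_one]
  refine ⟨-(h u u * t), neg_mem (Ideal.mul_mem_right _ _ (Ideal.mem_span_singleton_self _)), ?_⟩
  simp only [map_add, LinearMap.add_apply, map_smulₛₗ, LinearMap.smul_apply, smul_eq_mul,
    starRingEnd_apply, RingHom.id_apply, huv, hvv, hvu, star_neg, star_mul', hstar_t, hskew u u]
  linear_combination (-(h u u)) * ht

variable {m : ℕ} {b : Module.Basis (Fin m ⊕ Fin m) S V}

theorem IsSympBasis.apply_inr (hb : IsSympBasis h b) (u : V) (k : Fin m) :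
    h u (b (.inr k)) = star (b.repr u (.inl k)) := by
  rw [apply_eq_sum_star_repr_mul h b, Fintype.sum_sum_type]
  simp [hb.1, hb.2.2]

theorem IsSympBasis.apply_inl (hskew : ∀ x y, star (h x y) = - h y x) (hb : IsSympBasis h b)
    (u : V) (k : Fin m) :
    h u (b (.inl k)) = - star (b.repr u (.inr k)) := by
  have hinr_inl (j : Fin m) : h (b (.inr j)) (b (.inl k)) = - if j = k then 1 else 0 := by
    rw [← neg_neg (h _ _), ← hskew, hb.1]
    split_ifs <;> simp_all [eq_comm]
  rw [apply_eq_sum_star_repr_mul h b, Fintype.sum_sum_type]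
  simp [hb.2.1, hinr_inl]

theorem IsSympBasis.exists_isotropic_apply_eq_one (hskew : ∀ x y, star (h x y) = - h y x)
    (hb : IsSympBasis h b) {u : V} {i : Fin m ⊕ Fin m} (hu : IsUnit (b.repr u i)) :
    ∃ v, h u v = 1 ∧ h v v = 0 := by
  obtain ⟨j, hjj, hj⟩ : ∃ j, h (b j) (b j) = 0 ∧ IsUnit (h u (b j)) := by
    cases i with
    | inl k => exact ⟨.inr k, hb.2.2 k k, by rw [hb.apply_inr]; exact hu.star⟩
    | inr k => exact ⟨.inl k, hb.2.1 k k, by rw [hb.apply_inl hskew]; exact hu.star.neg⟩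
  refine ⟨(↑hj.unit⁻¹ : S) • b j, ?_, ?_⟩
  · rw [map_smul, smul_eq_mul, IsUnit.val_inv_mul]
  · simp [hjj]

end SkewHermitian

theorem stmt19_general [IsLocalRing S] {m : ℕ} (h2 : IsUnit (2 : S))
    (h : V →ₛₗ[starRingEnd S] V →ₗ[S] S)
    (hskew : ∀ x y, star (h x y) = - h y x)
    (b : Module.Basis (Fin m ⊕ Fin m) S V) (hb : IsSympBasis h b)
    (𝔦 : Ideal S) (hproper : 𝔦 ≠ ⊤)
    (u : V) (hlen : h u u ∈ 𝔦)
    (hbu : ∃ (c : Module.Basis (Fin m ⊕ Fin m) (S ⧸ 𝔦)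
        (V ⧸ (𝔦 • ⊤ : Submodule S V))) (i : Fin m ⊕ Fin m),
        c i = Submodule.Quotient.mk u) :
    ∃ w : V, IsBasisVector S m w ∧ h w w = 0 ∧
      (Submodule.Quotient.mk w : V ⧸ (𝔦 • ⊤ : Submodule S V)) =
        Submodule.Quotient.mk u := by
  obtain ⟨c, k, hc⟩ := hbu
  obtain ⟨i, hui⟩ :=
    IsLocalRing.exists_isUnit_repr_of_quotient_basis_apply_eq_mk hproper b c k hc
  obtain ⟨v, huv, hvv⟩ := hb.exists_isotropic_apply_eq_one hskew hui
  obtain ⟨a, ha, hw⟩ := exists_mem_span_apply_add_smul_self_eq_zero hskew h2 huv hvv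
  have ha𝔦 : a ∈ 𝔦 := (Ideal.span_singleton_le_iff_mem _).mpr hlen ha
  have hwi : IsUnit (b.repr (u + a • v) i) := by
    rw [map_add, map_smul, Finsupp.add_apply, Finsupp.smul_apply, smul_eq_mul]
    exact IsLocalRing.isUnit_add_of_mem_maximalIdeal hui
      (Ideal.mul_mem_right _ _ (IsLocalRing.le_maximalIdeal hproper ha𝔦))
  obtain ⟨c', hc'⟩ := b.exists_basis_apply_eq_of_isUnit_repr hwi
  refine ⟨u + a • v, ⟨c', i, hc'⟩, hw, ?_⟩
  rw [Submodule.Quotient.eq, add_sub_cancel_left]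
  exact Submodule.smul_mem_smul ha𝔦 Submodule.mem_top

/-- lifting basis vectors of length zero along the reduction
`V → Ṽ = V/𝔦V`, where `𝔦` is a proper `*`-invariant ideal of `S`.  If the image `ũ`
of `u` is a basis vector of `Ṽ` over `S̃ = S/𝔦` and `h̃(ũ,ũ) = 0` (i.e. `h(u,u) ∈ 𝔦`),
then there is a basis vector `w` of `V` with `h(w,w) = 0` mapping to `ũ`. -/
theorem stmt19 [IsLocalRing S] {m : ℕ} (h2 : IsUnit (2 : S))
    (h : V →ₛₗ[starRingEnd S] V →ₗ[S] S)
    (hskew : ∀ x y, star (h x y) = - h y x)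
    (hnd : ∀ x, (∀ y, h x y = 0) → x = 0)
    (b : Module.Basis (Fin m ⊕ Fin m) S V) (hb : IsSympBasis h b)
    (𝔦 : Ideal S) (hproper : 𝔦 ≠ ⊤) (hstar : ∀ s ∈ 𝔦, star s ∈ 𝔦)
    (u : V) (hlen : h u u ∈ 𝔦)
    (hbu : ∃ (c : Module.Basis (Fin m ⊕ Fin m) (S ⧸ 𝔦)
        (V ⧸ (𝔦 • ⊤ : Submodule S V))) (i : Fin m ⊕ Fin m),
        c i = Submodule.Quotient.mk u) :
    ∃ w : V, IsBasisVector S m w ∧ h w w = 0 ∧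
      (Submodule.Quotient.mk w : V ⧸ (𝔦 • ⊤ : Submodule S V)) =
        Submodule.Quotient.mk u :=
  stmt19_general h2 h hskew b hb 𝔦 hproper u hlen hbu
end
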